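/- arXiv:2010.01065 — 2 statements merged into one kernel-verified Lean document; each statement's English description precedes it below -/
import Mathlib

section
/- Suppose d¹ and d² are functions ℝ^n × ℝ^m × ℝ^n × ℝ^m → ℝ^n such that for each k ∈ {1,2}: whenever (x,w) ≤ (x̂,ŵ) and (y,v) ≤ (ŷ,v̂) with x ≤ y, w ≤ v, ŷ ≤ x̂, v̂ ≤ ŵ, one has dᵏ(x,w,x̂,ŵ) ≤ dᵏ(y,v,ŷ,v̂) componentwise (monotone increasing in first arguments, decreasing in second arguments, on ordered pairs). Then the piecewise combination d defined by d_i = max(d¹_i, d²_i) when (x,w) ≤ (x̂,ŵ) and d_i = min(d¹_i, d²_i) when (x̂,ŵ) ≤ (x,w) satisfies the same monotonicity property. -/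
theorem combined_decomposition_monotone_general (n m : ℕ)
    (d1 d2 d : (Fin n → ℝ) → (Fin m → ℝ) → (Fin n → ℝ) → (Fin m → ℝ) → Fin n → ℝ)
    (hmono1 : ∀ x w x' w' y v y' v', x ≤ x' → w ≤ w' → y ≤ y' → v ≤ v' →
      x ≤ y → w ≤ v → y' ≤ x' → v' ≤ w' → d1 x w x' w' ≤ d1 y v y' v')
    (hmono2 : ∀ x w x' w' y v y' v', x ≤ x' → w ≤ w' → y ≤ y' → v ≤ v' →
      x ≤ y → w ≤ v → y' ≤ x' → v' ≤ w' → d2 x w x' w' ≤ d2 y v y' v')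
    (hdmax : ∀ x w x' w', x ≤ x' → w ≤ w' →
      ∀ i, d x w x' w' i = max (d1 x w x' w' i) (d2 x w x' w' i)) :
    ∀ x w x' w' y v y' v', x ≤ x' → w ≤ w' → y ≤ y' → v ≤ v' →
      x ≤ y → w ≤ v → y' ≤ x' → v' ≤ w' → d x w x' w' ≤ d y v y' v' := by
  intro x w x' w' y v y' v' hx hw hy hv hxy hwv hyx' hvw' i
  rw [hdmax x w x' w' hx hw i, hdmax y v y' v' hy hv i]
  exact max_le_max (hmono1 x w x' w' y v y' v' hx hw hy hv hxy hwv hyx' hvw' i)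
    (hmono2 x w x' w' y v y' v' hx hw hy hv hxy hwv hyx' hvw' i)

theorem combined_decomposition_monotone (n m : ℕ)
    (d1 d2 d : (Fin n → ℝ) → (Fin m → ℝ) → (Fin n → ℝ) → (Fin m → ℝ) → Fin n → ℝ)
    (hmono1 : ∀ x w x' w' y v y' v', x ≤ x' → w ≤ w' → y ≤ y' → v ≤ v' →
      x ≤ y → w ≤ v → y' ≤ x' → v' ≤ w' → d1 x w x' w' ≤ d1 y v y' v')
    (hmono2 : ∀ x w x' w' y v y' v', x ≤ x' → w ≤ w' → y ≤ y' → v ≤ v' →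
      x ≤ y → w ≤ v → y' ≤ x' → v' ≤ w' → d2 x w x' w' ≤ d2 y v y' v')
    (hdmax : ∀ x w x' w', x ≤ x' → w ≤ w' →
      ∀ i, d x w x' w' i = max (d1 x w x' w' i) (d2 x w x' w' i))
    (hdmin : ∀ x w x' w', x' ≤ x → w' ≤ w →
      ∀ i, d x w x' w' i = min (d1 x w x' w' i) (d2 x w x' w' i)) :
    ∀ x w x' w' y v y' v', x ≤ x' → w ≤ w' → y ≤ y' → v ≤ v' →
      x ≤ y → w ≤ v → y' ≤ x' → v' ≤ w' → d x w x' w' ≤ d y v y' v' :=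
  combined_decomposition_monotone_general n m d1 d2 d hmono1 hmono2 hdmax
end

section
/- Let d be any decomposition function for F, i.e., d(x, w, x, w) = F(x, w), d is increasing in its first two arguments and decreasing in its last two arguments on ordered pairs. Let d* be the tight decomposition function d*_i(x, w, x̂, ŵ) = min_{y ∈ [x,x̂], y_i = x_i, z ∈ [w,ŵ]} F_i(y, z) for (x,w) ≤ (x̂,ŵ). Then for all (x, w) ≤ (x̂, ŵ), d(x, w, x̂, ŵ) ≤ d*(x, w, x̂, ŵ) componentwise. -/
theorem le_of_mem_Icc_of_monotone_decomposition {α β γ : Type*} [Preorder α] [Preorder β]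
    [Preorder γ] (F : α → β → γ) (d : α → β → α → β → γ)
    (hdiag : ∀ x w, d x w x w = F x w)
    (hmono : ∀ x w x' w' y v y' v', x ≤ x' → w ≤ w' → y ≤ y' → v ≤ v' →
      x ≤ y → w ≤ v → y' ≤ x' → v' ≤ w' → d x w x' w' ≤ d y v y' v')
    {x x' y : α} {w w' z : β} (hy : y ∈ Set.Icc x x') (hz : z ∈ Set.Icc w w') :
    d x w x' w' ≤ F y z :=
  hdiag y z ▸ hmono x w x' w' y z y z (hy.1.trans hy.2) (hz.1.trans hz.2) le_rfl le_rfl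
    hy.1 hz.1 hy.2 hz.2

theorem decomposition_le_tight_general (n m : ℕ)
    (F : (Fin n → ℝ) → (Fin m → ℝ) → Fin n → ℝ)
    (d dstar : (Fin n → ℝ) → (Fin m → ℝ) → (Fin n → ℝ) → (Fin m → ℝ) → Fin n → ℝ)
    (hdiag : ∀ x w, d x w x w = F x w)
    (hmono : ∀ x w x' w' y v y' v', x ≤ x' → w ≤ w' → y ≤ y' → v ≤ v' →
      x ≤ y → w ≤ v → y' ≤ x' → v' ≤ w' → d x w x' w' ≤ d y v y' v')
    (hstar : ∀ x w x' w', x ≤ x' → w ≤ w' → ∀ i,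
      dstar x w x' w' i =
        sInf {r : ℝ | ∃ y ∈ Set.Icc x x', y i = x i ∧ ∃ z ∈ Set.Icc w w', r = F y z i}) :
    ∀ x w x' w', x ≤ x' → w ≤ w' → d x w x' w' ≤ dstar x w x' w' := by
  intro x w x' w' hx hw i
  rw [hstar x w x' w' hx hw i]
  refine le_csInf ⟨F x w i, x, ⟨le_rfl, hx⟩, rfl, w, ⟨le_rfl, hw⟩, rfl⟩ ?_
  rintro _ ⟨y, hy, -, z, hz, rfl⟩
  exact le_of_mem_Icc_of_monotone_decomposition F d hdiag hmono hy hz i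

theorem decomposition_le_tight (n m : ℕ)
    (F : (Fin n → ℝ) → (Fin m → ℝ) → Fin n → ℝ)
    (hF : Continuous fun p : (Fin n → ℝ) × (Fin m → ℝ) => F p.1 p.2)
    (d dstar : (Fin n → ℝ) → (Fin m → ℝ) → (Fin n → ℝ) → (Fin m → ℝ) → Fin n → ℝ)
    (hdiag : ∀ x w, d x w x w = F x w)
    (hmono : ∀ x w x' w' y v y' v', x ≤ x' → w ≤ w' → y ≤ y' → v ≤ v' →
      x ≤ y → w ≤ v → y' ≤ x' → v' ≤ w' → d x w x' w' ≤ d y v y' v')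
    (hstar : ∀ x w x' w', x ≤ x' → w ≤ w' → ∀ i,
      dstar x w x' w' i =
        sInf {r : ℝ | ∃ y ∈ Set.Icc x x', y i = x i ∧ ∃ z ∈ Set.Icc w w', r = F y z i}) :
    ∀ x w x' w', x ≤ x' → w ≤ w' → d x w x' w' ≤ dstar x w x' w' :=
  decomposition_le_tight_general n m F d dstar hdiag hmono hstar
end
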